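/- arXiv:1808.10253 — 3 statements merged into one kernel-verified Lean document; each statement's English description precedes it below -/
import Mathlib

section
/- Let s = (s_k) be a positive log-convex sequence with s_0 = 1 and s_k^{1/k} → ∞, and define v_k := min_{0≤j≤k} s_j s_{k-j} for k ∈ ℕ. Then v_{2k} = s_k² and v_{2k+1} = s_k s_{k+1} for all k ∈ ℕ; consequently v is log-convex and its quotients satisfy v_{2k-1}/v_{2k-2} = v_{2k}/v_{2k-1} = s_k/s_{k-1} for all k ≥ 1. -/
open Real Filter MeasureTheory Asymptotics
open scoped BigOperators Topology NNReal ENNReal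

noncomputable section

/-- `ω` is a weight function: continuous, increasing on `[0,∞)`, `ω(0)=0`, `ω(t)→∞`,
`ω(2t)=O(ω(t))`, `log t = o(ω(t))`, and `φ_ω = ω ∘ exp` is convex on `[0,∞)`. -/
structure IsWeightFunction (ω : ℝ → ℝ) : Prop where
  continuousOn : ContinuousOn ω (Set.Ici 0)
  monotoneOn : MonotoneOn ω (Set.Ici 0)
  map_zero : ω 0 = 0
  nonneg : ∀ t : ℝ, 0 ≤ t → 0 ≤ ω t
  tendsto_atTop : Tendsto ω atTop atTop
  isBigO_two_mul : (fun t => ω (2 * t)) =O[atTop] ω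
  log_isLittleO : Real.log =o[atTop] ω
  convexOn_comp_exp : ConvexOn ℝ (Set.Ici 0) (fun x => ω (Real.exp x))

/-- Equivalence of weight functions: each is `O` of the other at `∞`. -/
def WeightEquiv (ω σ : ℝ → ℝ) : Prop :=
  ω =O[atTop] σ ∧ σ =O[atTop] ω

/-- `ω` is non-quasianalytic: `∫_1^∞ ω(t)/t² dt < ∞`. -/
def NonQuasianalytic (ω : ℝ → ℝ) : Prop :=
  IntegrableOn (fun t : ℝ => ω t / t ^ 2) (Set.Ici 1)

/-- Young conjugate `φ_ω*(y) = sup_{x ≥ 0} (x y − ω(exp x))`. -/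
def youngConj (ω : ℝ → ℝ) (y : ℝ) : ℝ :=
  ⨆ x : Set.Ici (0 : ℝ), ((x : ℝ) * y - ω (Real.exp (x : ℝ)))

/-- `S_k^ξ = exp((1/ξ) φ_σ*(ξ k))`. -/
def assocSBig (σ : ℝ → ℝ) (ξ : ℝ) (k : ℕ) : ℝ :=
  Real.exp ((1 / ξ) * youngConj σ (ξ * k))

/-- `s_k^ξ = S_k^ξ / k!`. -/
def assocS (σ : ℝ → ℝ) (ξ : ℝ) (k : ℕ) : ℝ :=
  assocSBig σ ξ k / (Nat.factorial k : ℝ)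

/-- `ω_m(t) = sup_k log(t^k / m_k)` for `t > 0`. -/
def omegaM (m : ℕ → ℝ) (t : ℝ) : ℝ := ⨆ k : ℕ, Real.log (t ^ k / m k)

/-- The log-convex minorant `\underline{m}_k = sup_{t>0} t^k / exp(ω_m(t))`. -/
def lcMinorant (m : ℕ → ℝ) (k : ℕ) : ℝ :=
  ⨆ t : Set.Ioi (0 : ℝ), (t : ℝ) ^ k / Real.exp (omegaM m (t : ℝ))

/-- `h_m(t) = inf_k m_k t^k` (for `t > 0`). -/
def hFun (m : ℕ → ℝ) (t : ℝ) : ℝ := ⨅ k : ℕ, m k * t ^ k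

/-- `Γ_m(t) = min{k : m_{k+1}/m_k ≥ 1/t}`. -/
def GammaIdx (m : ℕ → ℝ) (t : ℝ) : ℕ := sInf {k : ℕ | 1 / t ≤ m (k + 1) / m k}

/-- Infimal convolution of a sequence with itself: `v_k = min_{0 ≤ j ≤ k} s_j s_{k-j}`. -/
def infConv (s : ℕ → ℝ) (k : ℕ) : ℝ :=
  (Finset.range (k + 1)).inf' ⟨0, Finset.mem_range.mpr (Nat.succ_pos k)⟩ (fun j => s j * s (k - j))

/- Multi-index machinery. -/

/-- `|α| = ∑ α_i`. -/
def mSum {n : ℕ} (α : Fin n → ℕ) : ℕ := ∑ i, α i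

/-- `α! = ∏ (α_i)!`. -/
def mFact {n : ℕ} (α : Fin n → ℕ) : ℕ := ∏ i, Nat.factorial (α i)

/-- `x^α = ∏ x_i^{α_i}`. -/
def mPow {n : ℕ} (x : Fin n → ℝ) (α : Fin n → ℕ) : ℝ := ∏ i, x i ^ α i

/-- The finite set of multi-indices `β` with `|β| ≤ m`. -/
def mIdxLe (n m : ℕ) : Finset (Fin n → ℕ) :=
  (Fintype.piFinset fun _ => Finset.range (m + 1)).filter fun β => mSum β ≤ m

/-- First-order partial derivative in the `i`-th coordinate direction. -/
def pderivI {n : ℕ} (i : Fin n) (f : (Fin n → ℝ) → ℝ) : (Fin n → ℝ) → ℝ :=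
  fun x => fderiv ℝ f x (Pi.single i 1)

/-- Iterated partial derivative `∂^α f`. -/
def mDeriv {n : ℕ} (α : Fin n → ℕ) (f : (Fin n → ℝ) → ℝ) : (Fin n → ℝ) → ℝ :=
  (List.finRange n).foldr (fun i g => (pderivI i)^[α i] g) f

/-- Taylor polynomial of degree `p` of a jet `F` at `a`:
`T_a^p F(y) = ∑_{|β| ≤ p} F^β(a) (y-a)^β / β!`. -/
def jetTaylor {n : ℕ} (F : (Fin n → ℕ) → (Fin n → ℝ) → ℝ) (p : ℕ) (a : Fin n → ℝ) :
    (Fin n → ℝ) → ℝ :=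
  fun y => ∑ β ∈ mIdxLe n p, F β a * mPow (y - a) β / (mFact β : ℝ)

/-- Whitney remainder `(R_a^k F)^α(b) = F^α(b) − ∑_{|β| ≤ k−|α|} F^{α+β}(a)(b-a)^β/β!`. -/
def jetRem {n : ℕ} (F : (Fin n → ℕ) → (Fin n → ℝ) → ℝ) (k : ℕ) (α : Fin n → ℕ)
    (a b : Fin n → ℝ) : ℝ :=
  F α b - ∑ β ∈ mIdxLe n (k - mSum α), F (α + β) a * mPow (b - a) β / (mFact β : ℝ)

/-- A jet on `E`: a family of functions continuous on `E`. -/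
def IsJet {n : ℕ} (E : Set (Fin n → ℝ)) (F : (Fin n → ℕ) → (Fin n → ℝ) → ℝ) : Prop :=
  ∀ α : Fin n → ℕ, ContinuousOn (F α) E

/-- Whitney ultrajet of Roumieu class `B^{σ}` (weight function `σ`) on `E`. -/
def IsWhitneyUltrajetW {n : ℕ} (σ : ℝ → ℝ) (E : Set (Fin n → ℝ))
    (F : (Fin n → ℕ) → (Fin n → ℝ) → ℝ) : Prop :=
  IsJet E F ∧ ∃ ξ : ℝ, 0 < ξ ∧ ∃ C : ℝ, 0 < C ∧ ∃ ρ : ℝ, 1 ≤ ρ ∧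
    (∀ α : Fin n → ℕ, ∀ a ∈ E,
      |F α a| ≤ C * ρ ^ (mSum α) * Real.exp ((1 / ξ) * youngConj σ (ξ * (mSum α : ℝ)))) ∧
    (∀ k : ℕ, ∀ α : Fin n → ℕ, mSum α ≤ k → ∀ a ∈ E, ∀ b ∈ E,
      |jetRem F k α a b| ≤ C * ρ ^ (k + 1) *
        ((Nat.factorial (mSum α) : ℝ) / (Nat.factorial (k + 1) : ℝ)) *
        Real.exp ((1 / ξ) * youngConj σ (ξ * ((k : ℝ) + 1))) *
        ‖b - a‖ ^ (k + 1 - mSum α))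

/-- Global Roumieu class `B^{ω}(U)` for a weight function `ω`. -/
def MemRoumieuW {n : ℕ} (ω : ℝ → ℝ) (U : Set (Fin n → ℝ)) (f : (Fin n → ℝ) → ℝ) : Prop :=
  ContDiffOn ℝ (⊤ : ℕ∞) f U ∧ ∃ C : ℝ, 0 < C ∧ ∃ ρ : ℝ, 0 < ρ ∧
    ∀ α : Fin n → ℕ, ∀ x ∈ U,
      |mDeriv α f x| ≤ C * Real.exp ((1 / ρ) * youngConj ω (ρ * (mSum α : ℝ)))

/-- Global Beurling class `B^{(ω)}(U)` for a weight function `ω`. -/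
def MemBeurlingW {n : ℕ} (ω : ℝ → ℝ) (U : Set (Fin n → ℝ)) (f : (Fin n → ℝ) → ℝ) : Prop :=
  ContDiffOn ℝ (⊤ : ℕ∞) f U ∧ ∀ ρ : ℝ, 0 < ρ → ∃ C : ℝ, 0 < C ∧
    ∀ α : Fin n → ℕ, ∀ x ∈ U,
      |mDeriv α f x| ≤ C * Real.exp ((1 / ρ) * youngConj ω (ρ * (mSum α : ℝ)))

/-- Global Roumieu class `B^{M}(U)` for a weight sequence `M`. -/
def MemRoumieuM {n : ℕ} (M : ℕ → ℝ) (U : Set (Fin n → ℝ)) (f : (Fin n → ℝ) → ℝ) : Prop :=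
  ContDiffOn ℝ (⊤ : ℕ∞) f U ∧ ∃ C : ℝ, 0 < C ∧ ∃ ρ : ℝ, 0 < ρ ∧
    ∀ α : Fin n → ℕ, ∀ x ∈ U, |mDeriv α f x| ≤ C * ρ ^ (mSum α) * M (mSum α)

/-- Global Beurling class `B^{(M)}(U)` for a weight sequence `M`. -/
def MemBeurlingM {n : ℕ} (M : ℕ → ℝ) (U : Set (Fin n → ℝ)) (f : (Fin n → ℝ) → ℝ) : Prop :=
  ContDiffOn ℝ (⊤ : ℕ∞) f U ∧ ∀ ρ : ℝ, 0 < ρ → ∃ C : ℝ, 0 < C ∧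
    ∀ α : Fin n → ℕ, ∀ x ∈ U, |mDeriv α f x| ≤ C * ρ ^ (mSum α) * M (mSum α)

/-- Roumieu class of a weight matrix: union over the matrix. -/
def MemRoumieuMx {n : ℕ} (𝔐 : Set (ℕ → ℝ)) (U : Set (Fin n → ℝ))
    (f : (Fin n → ℝ) → ℝ) : Prop :=
  ∃ M ∈ 𝔐, MemRoumieuM M U f

/-- Beurling class of a weight matrix: intersection over the matrix. -/
def MemBeurlingMx {n : ℕ} (𝔐 : Set (ℕ → ℝ)) (U : Set (Fin n → ℝ))
    (f : (Fin n → ℝ) → ℝ) : Prop :=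
  ∀ M ∈ 𝔐, MemBeurlingM M U f

/-- A weight sequence: `M_0 = 1`, log-convex, `M_k ≥ k!`, `M_k^{1/k} → ∞`. -/
structure IsWeightSeq (M : ℕ → ℝ) : Prop where
  map_zero : M 0 = 1
  logConvex : ∀ k : ℕ, 1 ≤ k → M k ^ 2 ≤ M (k - 1) * M (k + 1)
  factorial_le : ∀ k : ℕ, (Nat.factorial k : ℝ) ≤ M k
  root_tendsto : Tendsto (fun k : ℕ => M k ^ ((k : ℝ)⁻¹)) atTop atTop

/-- `M` is strongly log-convex: `(M_k/k!)` is log-convex. -/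
def StronglyLogConvex (M : ℕ → ℝ) : Prop :=
  ∀ k : ℕ, 1 ≤ k → (M k / (Nat.factorial k : ℝ)) ^ 2 ≤
    (M (k - 1) / (Nat.factorial (k - 1) : ℝ)) * (M (k + 1) / (Nat.factorial (k + 1) : ℝ))

/-- A weight matrix: a nonempty family of weight sequences, totally ordered pointwise. -/
def IsWeightMatrix (𝔐 : Set (ℕ → ℝ)) : Prop :=
  𝔐.Nonempty ∧ (∀ M ∈ 𝔐, IsWeightSeq M) ∧
    ∀ M ∈ 𝔐, ∀ N ∈ 𝔐, (∀ k, M k ≤ N k) ∨ (∀ k, N k ≤ M k)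

/-- The infimal convolution `v` of a log-convex sequence `s` with itself: explicit values,
log-convexity, and the quotient identities (7). -/
theorem infConv_values_and_quotients (s : ℕ → ℝ) (hpos : ∀ k, 0 < s k) (h0 : s 0 = 1)
    (hlc : ∀ k : ℕ, 1 ≤ k → s k ^ 2 ≤ s (k - 1) * s (k + 1))
    (hroot : Tendsto (fun k : ℕ => s k ^ ((k : ℝ)⁻¹)) atTop atTop) :
    (∀ k : ℕ, infConv s (2 * k) = s k ^ 2 ∧ infConv s (2 * k + 1) = s k * s (k + 1)) ∧
    (∀ k : ℕ, 1 ≤ k → infConv s k ^ 2 ≤ infConv s (k - 1) * infConv s (k + 1)) ∧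
    (∀ k : ℕ, 1 ≤ k →
      infConv s (2 * k - 1) / infConv s (2 * k - 2) = s k / s (k - 1) ∧
      infConv s (2 * k) / infConv s (2 * k - 1) = s k / s (k - 1)) := by
  -- quotients are increasing
  have hq : ∀ a b : ℕ, a ≤ b → s (a + 1) * s b ≤ s a * s (b + 1) := by
    have hr : Monotone (fun k => s (k + 1) / s k) := by
      apply monotone_nat_of_le_succ
      intro k
      rw [div_le_div_iff₀ (hpos k) (hpos (k + 1))]
      have h := hlc (k + 1) (by omega)
      simp only [Nat.add_sub_cancel] at h
      nlinarith [hpos k, hpos (k + 1), hpos (k + 2)]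
    intro a b hab
    have h := hr hab
    rw [div_le_div_iff₀ (hpos a) (hpos b)] at h
    linarith
  have hspread : ∀ d j e : ℕ, s (j + d) * s (j + d + e) ≤ s j * s (j + (2 * d + e)) := by
    intro d
    induction d with
    | zero => intro j e; simp
    | succ d ih =>
      intro j e
      have h1 := hq (j + d) (j + d + 1 + e) (by omega)
      have h2 := ih j (e + 2)
      have e1 : j + (d + 1) = j + d + 1 := by omega
      have e2 : j + (d + 1) + e = j + d + 1 + e := by omega
      have e3 : j + d + 1 + e + 1 = j + d + (e + 2) := by omega
      have e4 : j + (2 * d + (e + 2)) = j + (2 * (d + 1) + e) := by omega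
      calc s (j + d + 1) * s (j + d + 1 + e) ≤ s (j + d) * s (j + d + 1 + e + 1) := h1
        _ = s (j + d) * s (j + d + (e + 2)) := by rw [e3]
        _ ≤ s j * s (j + (2 * d + (e + 2))) := h2
        _ = s j * s (j + (2 * (d + 1) + e)) := by rw [e4]
  have hmin0 : ∀ k j : ℕ, 2 * j ≤ k → s (k / 2) * s (k - k / 2) ≤ s j * s (k - j) := by
    intro k j h
    have h' := hspread (k / 2 - j) j (k - 2 * (k / 2))
    have e1 : j + (k / 2 - j) = k / 2 := by omega
    have e2 : k / 2 + (k - 2 * (k / 2)) = k - k / 2 := by omega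
    have e3 : j + (2 * (k / 2 - j) + (k - 2 * (k / 2))) = k - j := by omega
    rw [e1, e2, e3] at h'
    exact h'
  have hmin : ∀ k j : ℕ, j ≤ k → s (k / 2) * s (k - k / 2) ≤ s j * s (k - j) := by
    intro k j hj
    rcases le_or_gt (2 * j) k with h | h
    · exact hmin0 k j h
    · have h' := hmin0 k (k - j) (by omega)
      have e : k - (k - j) = j := by omega
      rw [e] at h'
      rw [mul_comm (s j) (s (k - j))]
      exact h'
  have hval : ∀ k : ℕ, infConv s k = s (k / 2) * s (k - k / 2) := by
    intro k
    apply le_antisymm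
    · have hm : k / 2 ∈ Finset.range (k + 1) := Finset.mem_range.mpr (by omega)
      exact Finset.inf'_le _ hm
    · apply Finset.le_inf'
      intro j hj
      exact hmin k j (Nat.lt_succ_iff.mp (Finset.mem_range.mp hj))
  have hev : ∀ m : ℕ, infConv s (2 * m) = s m ^ 2 := by
    intro m
    rw [hval]
    have e1 : 2 * m / 2 = m := by omega
    rw [e1]
    have e2 : 2 * m - m = m := by omega
    rw [e2, sq]
  have hod : ∀ m : ℕ, infConv s (2 * m + 1) = s m * s (m + 1) := by
    intro m
    rw [hval]
    have e1 : (2 * m + 1) / 2 = m := by omega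
    rw [e1]
    have e2 : 2 * m + 1 - m = m + 1 := by omega
    rw [e2]
  refine ⟨fun k => ⟨hev k, hod k⟩, ?_, ?_⟩
  · intro k hk
    rcases Nat.even_or_odd k with ⟨m, hm⟩ | ⟨m, hm⟩
    · have hm1 : 1 ≤ m := by omega
      have ek : k = 2 * m := by omega
      have ek1 : k - 1 = 2 * (m - 1) + 1 := by omega
      have ek2 : k + 1 = 2 * m + 1 := by omega
      have em : m - 1 + 1 = m := by omega
      have A : infConv s k = s m ^ 2 := by rw [ek, hev]
      have B : infConv s (k - 1) = s (m - 1) * s m := by rw [ek1, hod, em]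
      have C : infConv s (k + 1) = s m * s (m + 1) := by rw [ek2, hod]
      rw [A, B, C]
      have h := hlc m hm1
      nlinarith [hpos m, hpos (m - 1), hpos (m + 1)]
    · have ek : k = 2 * m + 1 := by omega
      have ek1 : k - 1 = 2 * m := by omega
      have ek2 : k + 1 = 2 * (m + 1) := by omega
      have A : infConv s k = s m * s (m + 1) := by rw [ek, hod]
      have B : infConv s (k - 1) = s m ^ 2 := by rw [ek1, hev]
      have C : infConv s (k + 1) = s (m + 1) ^ 2 := by rw [ek2, hev]
      rw [A, B, C]
      ring_nf
      nlinarith [hpos m, hpos (m + 1)]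
  · intro k hk
    obtain ⟨m, rfl⟩ : ∃ m, k = m + 1 := ⟨k - 1, by omega⟩
    have e1 : 2 * (m + 1) - 1 = 2 * m + 1 := by omega
    have e2 : 2 * (m + 1) - 2 = 2 * m := by omega
    have e3 : m + 1 - 1 = m := by omega
    have e4 : 2 * (m + 1) = 2 * m + 1 + 1 := by omega
    have h1 : s m ≠ 0 := (hpos m).ne'
    have h2 : s (m + 1) ≠ 0 := (hpos (m + 1)).ne'
    constructor
    · rw [e1, hod, e2, hev, e3, sq]
      field_simp
    · rw [hev, e1, hod, e3]
      field_simp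
end
end

section
/- Let s = (s_k) be a positive log-convex sequence with s_0 = 1 and s_k/s_{k-1} → ∞, and define v_k := min_{0≤j≤k} s_j s_{k-j}. Then 2Γ_s(t) = Γ_v(t) for all t > 0, where Γ_m(t) := min{k ∈ ℕ : m_{k+1}/m_k ≥ 1/t}. -/
open Real Filter MeasureTheory Asymptotics
open scoped BigOperators Topology NNReal ENNReal

noncomputable section

/-- Equation (8): `2 Γ_s(t) = Γ_v(t)` for the infimal convolution `v` of `s` with itself. -/
theorem two_gamma_eq_gamma_infConv (s : ℕ → ℝ) (hpos : ∀ k, 0 < s k) (h0 : s 0 = 1)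
    (hlc : ∀ k : ℕ, 1 ≤ k → s k ^ 2 ≤ s (k - 1) * s (k + 1))
    (hquot : Tendsto (fun k : ℕ => s (k + 1) / s k) atTop atTop) :
    ∀ t : ℝ, 0 < t → 2 * GammaIdx s t = GammaIdx (infConv s) t := by
  have hr : Monotone (fun a : ℕ => s (a + 1) / s a) := by
    apply monotone_nat_of_le_succ
    intro a
    have h := hlc (a + 1) (by omega)
    simp only [Nat.add_sub_cancel] at h
    rw [div_le_div_iff₀ (hpos a) (hpos (a + 1))]
    nlinarith [hpos a, hpos (a + 1), hpos (a + 2)]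
  have hstep : ∀ k j : ℕ, j + 1 ≤ k - j → s (j + 1) * s (k - (j + 1)) ≤ s j * s (k - j) := by
    intro k j h
    have h1 : j ≤ k - j - 1 := by omega
    have h2 := hr h1
    simp only at h2
    have he : k - j - 1 + 1 = k - j := by omega
    rw [he] at h2
    have he2 : k - (j + 1) = k - j - 1 := by omega
    rw [he2]
    rw [div_le_div_iff₀ (hpos j) (hpos (k - j - 1))] at h2
    nlinarith [hpos j, hpos (k - j - 1), hpos (k - j)]
  have hchain : ∀ k m : ℕ, m ≤ k / 2 → ∀ j, j ≤ m → s m * s (k - m) ≤ s j * s (k - j) := by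
    intro k m
    induction m with
    | zero =>
      intro _ j hj
      have : j = 0 := by omega
      subst this; exact le_rfl
    | succ m ih =>
      intro hm j hj
      rcases Nat.eq_or_lt_of_le hj with h | h
      · subst h; exact le_rfl
      · have h1 : s (m + 1) * s (k - (m + 1)) ≤ s m * s (k - m) := hstep k m (by omega)
        exact le_trans h1 (ih (by omega) j (by omega))
  have hmid : ∀ k j : ℕ, j ≤ k → s (k / 2) * s (k - k / 2) ≤ s j * s (k - j) := by
    intro k j hj
    by_cases hc : j ≤ k / 2
    · exact hchain k (k / 2) le_rfl j hc
    · have h1 : k - j ≤ k / 2 := by omega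
      have h2 := hchain k (k / 2) le_rfl (k - j) h1
      have he : k - (k - j) = j := by omega
      rw [he] at h2
      rw [mul_comm (s j)]
      exact h2
  have hv : ∀ k, infConv s k = s (k / 2) * s (k - k / 2) := by
    intro k
    simp only [infConv]
    apply le_antisymm
    · exact Finset.inf'_le _ (Finset.mem_range.mpr (by omega))
    · apply Finset.le_inf'
      intro j hj
      exact hmid k j (Nat.lt_succ_iff.mp (Finset.mem_range.mp hj))
  have hvr : ∀ k, infConv s (k + 1) / infConv s k = s (k / 2 + 1) / s (k / 2) := by
    intro k
    rw [hv, hv]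
    obtain ⟨n, hn | hn⟩ := Nat.even_or_odd' k
    · subst hn
      have e2 : (2 * n + 1) / 2 = n := by omega
      have e4 : 2 * n + 1 - n = n + 1 := by omega
      have e1 : 2 * n / 2 = n := by omega
      have e3 : 2 * n - n = n := by omega
      rw [e2, e4, e1, e3]
      rw [div_eq_div_iff (ne_of_gt (mul_pos (hpos n) (hpos n))) (ne_of_gt (hpos n))]
      ring
    · subst hn
      have e2 : (2 * n + 1 + 1) / 2 = n + 1 := by omega
      have e4 : 2 * n + 1 + 1 - (n + 1) = n + 1 := by omega
      have e1 : (2 * n + 1) / 2 = n := by omega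
      have e3 : 2 * n + 1 - n = n + 1 := by omega
      rw [e2, e4, e1, e3]
      rw [div_eq_div_iff (ne_of_gt (mul_pos (hpos n) (hpos (n + 1)))) (ne_of_gt (hpos n))]
      ring
  intro t ht
  have hne : {k : ℕ | 1 / t ≤ s (k + 1) / s k}.Nonempty := by
    obtain ⟨k, hk⟩ := (hquot.eventually_ge_atTop (1 / t)).exists
    exact ⟨k, hk⟩
  have hNmem : 1 / t ≤ s (GammaIdx s t + 1) / s (GammaIdx s t) := Nat.sInf_mem hne
  have hiff : ∀ k : ℕ, 1 / t ≤ s (k + 1) / s k ↔ GammaIdx s t ≤ k := by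
    intro k
    constructor
    · intro h; exact Nat.sInf_le h
    · intro h; exact le_trans hNmem (hr h)
  have hset : {k : ℕ | 1 / t ≤ infConv s (k + 1) / infConv s k} =
      {k : ℕ | 2 * GammaIdx s t ≤ k} := by
    ext k
    simp only [Set.mem_setOf_eq, hvr k, hiff (k / 2)]
    omega
  have hfin : GammaIdx (infConv s) t = 2 * GammaIdx s t := by
    show sInf {k : ℕ | 1 / t ≤ infConv s (k + 1) / infConv s k} = 2 * GammaIdx s t
    rw [hset]
    have hmem : 2 * GammaIdx s t ∈ {k : ℕ | 2 * GammaIdx s t ≤ k} := Set.mem_setOf_eq ▸ le_rfl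
    exact le_antisymm (Nat.sInf_le hmem) (Nat.sInf_mem ⟨_, hmem⟩)
  rw [hfin]
end
end

section
/- There is a constant C_0 = C_0(n) > 1 with the following property. Let E ⊆ ℝⁿ be a nonempty compact set, let s = (s_k) be a positive log-convex sequence with s_0 = 1 and s_{k+1}/s_k → ∞, set v_k := min_{0≤j≤k} s_j s_{k-j}, V_k := k! v_k, and Γ_s(t) := min{k ∈ ℕ : s_{k+1}/s_k ≥ 1/t} for t > 0. Let F = (F^α)_{α∈ℕⁿ} be a jet on E and C > 0, ρ ≥ 1 constants such that |F^α(a)| ≤ C ρ^{|α|} V_{|α|} for all α ∈ ℕⁿ, a ∈ E, and |(R_a^k F)^α(b)| ≤ C ρ^{k+1} |α|! v_{k+1} |b−a|^{k+1−|α|} for all k ∈ ℕ, |α| ≤ k, a, b ∈ E. Then for every L ≥ C_0 ρ, every x ∈ ℝⁿ∖E with nearest point x̂ ∈ E (|x − x̂| = d(x) := dist(x,E)) and p(x) := max{2Γ_s(L d(x)) − 1, 0}, and every α ∈ ℕⁿ: |(T_{x̂}^{p(x)}F)^{(α)}(x)| ≤ C (2L)^{|α|+1} V_{|α|}, and moreover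 if |α| < p(x) then |(T_{x̂}^{p(x)}F)^{(α)}(x) − F^α(x̂)| ≤ C (2L)^{|α|+1} |α|! v_{|α|+1} d(x). -/
open Real Filter MeasureTheory Asymptotics
open scoped BigOperators Topology NNReal ENNReal

noncomputable section

/-! ### Auxiliary lemmas -/

lemma mPow_update {n : ℕ} (z : Fin n → ℝ) (β : Fin n → ℕ) (j : Fin n) (m : ℕ) :
    mPow z (Function.update β j m) = z j ^ m * ∏ i ∈ Finset.univ.erase j, z i ^ β i := by
  unfold mPow
  rw [← Finset.mul_prod_erase _ _ (Finset.mem_univ j), Function.update_self]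
  congr 1
  exact Finset.prod_congr rfl fun i hi =>
    by rw [Function.update_of_ne (Finset.ne_of_mem_erase hi)]

lemma hasFDerivAt_mPow {n : ℕ} (a : Fin n → ℝ) (β : Fin n → ℕ) (x : Fin n → ℝ) :
    HasFDerivAt (fun y : Fin n → ℝ => mPow (y - a) β)
      (∑ j, ((β j : ℝ) * mPow (x - a) (Function.update β j (β j - 1))) •
        (ContinuousLinearMap.proj j : (Fin n → ℝ) →L[ℝ] ℝ)) x := by
  have h : ∀ j : Fin n, HasFDerivAt (fun y : Fin n → ℝ => (y j - a j) ^ β j)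
      (((β j : ℝ) * (x j - a j) ^ (β j - 1)) • (ContinuousLinearMap.proj j : (Fin n → ℝ) →L[ℝ] ℝ)) x := by
    intro j
    have h1 : HasDerivAt (fun t : ℝ => (t - a j) ^ β j) ((β j : ℝ) * (x j - a j) ^ (β j - 1)) (x j) := by
      simpa using ((hasDerivAt_id (x j)).sub_const (a j)).fun_pow (β j)
    exact h1.comp_hasFDerivAt (h₂ := fun t : ℝ => (t - a j) ^ β j) (f := fun y : Fin n → ℝ => y j) x ((ContinuousLinearMap.proj j : (Fin n → ℝ) →L[ℝ] ℝ).hasFDerivAt)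
  have H := HasFDerivAt.finset_prod (u := Finset.univ) (fun j _ => h j)
  have hL : (∑ i, (∏ j ∈ Finset.univ.erase i, (x j - a j) ^ β j) •
      (((β i : ℝ) * (x i - a i) ^ (β i - 1)) • (ContinuousLinearMap.proj i : (Fin n → ℝ) →L[ℝ] ℝ)))
      = (∑ j, ((β j : ℝ) * mPow (x - a) (Function.update β j (β j - 1))) •
        (ContinuousLinearMap.proj j : (Fin n → ℝ) →L[ℝ] ℝ)) := by
    refine Finset.sum_congr rfl fun j _ => ?_
    rw [smul_smul, mPow_update]
    congr 1
    simp only [Pi.sub_apply]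
    ring
  rw [← hL]
  exact H

lemma pderivI_sum_mono {n : ℕ} (a : Fin n → ℝ) (i : Fin n) (B : Finset (Fin n → ℕ))
    (c : (Fin n → ℕ) → ℝ) (e : (Fin n → ℕ) → (Fin n → ℕ)) :
    pderivI i (fun y => ∑ β ∈ B, c β * mPow (y - a) (e β)) =
      fun y => ∑ β ∈ B, c β * ((e β i : ℕ) : ℝ) * mPow (y - a) (Function.update (e β) i (e β i - 1)) := by
  funext x
  have H : HasFDerivAt (fun y : Fin n → ℝ => ∑ β ∈ B, c β * mPow (y - a) (e β))
      (∑ β ∈ B, c β • (∑ j, ((e β j : ℝ) * mPow (x - a) (Function.update (e β) j (e β j - 1))) •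
        (ContinuousLinearMap.proj j : (Fin n → ℝ) →L[ℝ] ℝ))) x :=
    HasFDerivAt.fun_sum fun β _ => (hasFDerivAt_mPow a (e β) x).const_mul (c β)
  rw [pderivI, H.fderiv]
  simp only [ContinuousLinearMap.coe_sum', Finset.sum_apply, ContinuousLinearMap.coe_smul',
    Pi.smul_apply, ContinuousLinearMap.smul_apply, ContinuousLinearMap.proj_apply, smul_eq_mul]
  refine Finset.sum_congr rfl fun β _ => ?_
  rw [Finset.sum_eq_single i]
  · simp [mul_assoc]
  · intro j _ hj
    simp [Pi.single_apply, if_neg hj.symm, if_neg hj]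
  · simp

lemma pderivI_iter_sum_mono {n : ℕ} (a : Fin n → ℝ) (i : Fin n) (k : ℕ) (B : Finset (Fin n → ℕ))
    (c : (Fin n → ℕ) → ℝ) (e : (Fin n → ℕ) → (Fin n → ℕ)) :
    (pderivI i)^[k] (fun y => ∑ β ∈ B, c β * mPow (y - a) (e β)) =
      fun y => ∑ β ∈ B, c β * ((e β i).descFactorial k : ℝ) *
        mPow (y - a) (Function.update (e β) i (e β i - k)) := by
  induction k with
  | zero =>
    simp only [Function.iterate_zero, id_eq, Nat.descFactorial_zero, Nat.cast_one, mul_one,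
      Nat.sub_zero, Function.update_eq_self]
  | succ k ih =>
    rw [Function.iterate_succ_apply', ih]
    have := pderivI_sum_mono a i B (fun β => c β * ((e β i).descFactorial k : ℝ))
      (fun β => Function.update (e β) i (e β i - k))
    rw [this]
    funext y
    refine Finset.sum_congr rfl fun β _ => ?_
    rw [Function.update_self, Function.update_idem]
    rw [Nat.sub_sub, Nat.descFactorial_succ]
    push_cast
    ring

lemma foldr_sum_mono {n : ℕ} (a : Fin n → ℝ) (α : Fin n → ℕ) (B : Finset (Fin n → ℕ))
    (c : (Fin n → ℕ) → ℝ) :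
    ∀ l : List (Fin n), l.Nodup →
    (l.foldr (fun i g => (pderivI i)^[α i] g) (fun y => ∑ β ∈ B, c β * mPow (y - a) β)) =
      fun y => ∑ β ∈ B, (c β * ∏ i ∈ l.toFinset, ((β i).descFactorial (α i) : ℝ)) *
        mPow (y - a) (fun j => if j ∈ l then β j - α j else β j) := by
  intro l
  induction l with
  | nil => intro _; simp
  | cons i l ih =>
    intro hnd
    have hil : i ∉ l := (List.nodup_cons.mp hnd).1
    have hl : l.Nodup := (List.nodup_cons.mp hnd).2
    rw [List.foldr_cons, ih hl]
    have key := pderivI_iter_sum_mono a i (α i) B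
      (fun β => c β * ∏ j ∈ l.toFinset, ((β j).descFactorial (α j) : ℝ))
      (fun β => fun j => if j ∈ l then β j - α j else β j)
    rw [key]
    funext y
    refine Finset.sum_congr rfl fun β _ => ?_
    rw [if_neg hil]
    congr 1
    · rw [List.toFinset_cons, Finset.prod_insert (by simpa using hil)]
      ring
    · congr 1
      funext j
      by_cases hj : j = i
      · subst hj
        rw [Function.update_self]
        simp [hil]
      · rw [Function.update_of_ne hj]
        by_cases hjl : j ∈ l <;> simp [hjl, hj]

lemma mDeriv_sum_mono {n : ℕ} (a : Fin n → ℝ) (α : Fin n → ℕ) (B : Finset (Fin n → ℕ))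
    (c : (Fin n → ℕ) → ℝ) :
    mDeriv α (fun y => ∑ β ∈ B, c β * mPow (y - a) β) =
      fun y => ∑ β ∈ B, (c β * ∏ i, ((β i).descFactorial (α i) : ℝ)) * mPow (y - a) (β - α) := by
  rw [mDeriv, foldr_sum_mono a α B c _ (List.nodup_finRange n)]
  funext y
  refine Finset.sum_congr rfl fun β _ => ?_
  congr 1
  · rw [List.toFinset_finRange]
  · congr 1
    funext j
    rw [if_pos (List.mem_finRange j)]
    rfl

lemma choose_le_two_pow' (m k : ℕ) : m.choose k ≤ 2 ^ m := by
  rcases le_or_gt k m with h | h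
  · calc m.choose k ≤ ∑ j ∈ Finset.range (m+1), m.choose j :=
        Finset.single_le_sum (fun j _ => Nat.zero_le _) (Finset.mem_range.mpr (Nat.lt_succ_of_le h))
    _ = 2 ^ m := Nat.sum_range_choose m
  · simp [Nat.choose_eq_zero_of_lt h]

lemma fact_add_le' (a b : ℕ) : (a + b).factorial ≤ 2 ^ (a + b) * (a.factorial * b.factorial) := by
  have h1 : (a + b).choose a * (a.factorial * b.factorial) = (a + b).factorial := by
    have := Nat.choose_mul_factorial_mul_factorial (Nat.le_add_right a b)
    simpa [Nat.add_sub_cancel_left, mul_assoc] using this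
  calc (a + b).factorial = (a + b).choose a * (a.factorial * b.factorial) := h1.symm
  _ ≤ 2 ^ (a + b) * (a.factorial * b.factorial) :=
      Nat.mul_le_mul_right _ (choose_le_two_pow' _ _)

lemma aux_fact (n a S F : ℕ) (hF : S.factorial ≤ n ^ S * F) :
    (a + S).factorial ≤ (n + 1) ^ (a + S) * (a.factorial * F) := by
  have h1 : (a + S).factorial = (a + S).choose a * (a.factorial * S.factorial) := by
    have := Nat.choose_mul_factorial_mul_factorial (Nat.le_add_right a S)
    simpa [Nat.add_sub_cancel_left, mul_assoc] using this.symm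
  have h2 : (a + S).choose a * n ^ S ≤ (n + 1) ^ (a + S) := by
    have hbin : (n + 1) ^ (a + S) =
        ∑ k ∈ Finset.range (a + S + 1), n ^ k * 1 ^ (a + S - k) * (a + S).choose k :=
      add_pow n 1 (a + S)
    calc (a + S).choose a * n ^ S = n ^ S * 1 ^ (a + S - S) * (a + S).choose S := by
          rw [one_pow, mul_one, Nat.choose_symm_add, Nat.mul_comm]
    _ ≤ ∑ k ∈ Finset.range (a + S + 1), n ^ k * 1 ^ (a + S - k) * (a + S).choose k :=
          Finset.single_le_sum (f := fun k => n ^ k * 1 ^ (a + S - k) * (a + S).choose k)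
            (fun k _ => Nat.zero_le _) (Finset.mem_range.mpr (by omega : S < a + S + 1))
    _ = (n + 1) ^ (a + S) := hbin.symm
  calc (a + S).factorial = (a + S).choose a * (a.factorial * S.factorial) := h1
  _ ≤ (a + S).choose a * (a.factorial * (n ^ S * F)) :=
      Nat.mul_le_mul_left _ (Nat.mul_le_mul_left _ hF)
  _ = ((a + S).choose a * n ^ S) * (a.factorial * F) := by ring
  _ ≤ (n + 1) ^ (a + S) * (a.factorial * F) := Nat.mul_le_mul_right _ h2

lemma mSum_fact_le {n : ℕ} (γ : Fin n → ℕ) : (mSum γ).factorial ≤ n ^ (mSum γ) * mFact γ := by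
  induction n with
  | zero => simp [mSum, mFact]
  | succ n ih =>
    rw [show mSum γ = γ 0 + mSum (Fin.tail γ) by
          rw [mSum, mSum, Fin.sum_univ_succ]; rfl,
        show mFact γ = (γ 0).factorial * mFact (Fin.tail γ) by
          rw [mFact, mFact, Fin.prod_univ_succ]; rfl]
    exact aux_fact n (γ 0) (mSum (Fin.tail γ)) (mFact (Fin.tail γ)) (ih (Fin.tail γ))

lemma infConv_pos (s : ℕ → ℝ) (hs : ∀ k, 0 < s k) (k : ℕ) : 0 < infConv s k := by
  rw [infConv]
  obtain ⟨j, hj, hje⟩ := Finset.exists_mem_eq_inf' (Finset.nonempty_range_add_one (n := k))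
    (fun j => s j * s (k - j))
  rw [hje]
  exact mul_pos (hs j) (hs (k - j))

lemma infConv_le (s : ℕ → ℝ) (k j : ℕ) (hj : j ≤ k) : infConv s k ≤ s j * s (k - j) :=
  Finset.inf'_le _ (Finset.mem_range.mpr (Nat.lt_succ_of_le hj))

lemma infConv_step (s : ℕ → ℝ) (hs : ∀ k, 0 < s k) (t : ℝ) (ht : 0 < t) (k : ℕ)
    (hk : k + 1 ≤ 2 * GammaIdx s t - 1) :
    t * infConv s (k + 1) ≤ infConv s k := by
  obtain ⟨j, hj, hje⟩ := Finset.exists_mem_eq_inf' (Finset.nonempty_range_add_one (n := k))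
    (fun j => s j * s (k - j))
  rw [Finset.mem_range, Nat.lt_succ_iff] at hj
  have hvk : infConv s k = s j * s (k - j) := hje
  set Γ := GammaIdx s t with hΓ
  have hq : ∀ m, m < Γ → t * s (m + 1) ≤ s m := by
    intro m hm
    have hnm : m ∉ {k : ℕ | 1 / t ≤ s (k + 1) / s k} := Nat.notMem_of_lt_sInf hm
    simp only [Set.mem_setOf_eq, not_le] at hnm
    have h2 := (div_lt_div_iff₀ (hs m) ht).mp hnm
    nlinarith
  rcases le_total j (k - j) with hc | hc
  · have hjΓ : j < Γ := by omega
    have h1 : infConv s (k + 1) ≤ s (j + 1) * s (k - j) := by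
      have := infConv_le s (k + 1) (j + 1) (by omega)
      simpa [show k + 1 - (j + 1) = k - j by omega] using this
    calc t * infConv s (k + 1) ≤ t * (s (j + 1) * s (k - j)) :=
          mul_le_mul_of_nonneg_left h1 ht.le
    _ = (t * s (j + 1)) * s (k - j) := by ring
    _ ≤ s j * s (k - j) := mul_le_mul_of_nonneg_right (hq j hjΓ) (hs _).le
    _ = infConv s k := hvk.symm
  · have hjΓ : k - j < Γ := by omega
    have h1 : infConv s (k + 1) ≤ s j * s (k - j + 1) := by
      have := infConv_le s (k + 1) j (by omega)
      simpa [show k + 1 - j = k - j + 1 by omega] using this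
    calc t * infConv s (k + 1) ≤ t * (s j * s (k - j + 1)) :=
          mul_le_mul_of_nonneg_left h1 ht.le
    _ = (t * s (k - j + 1)) * s j := by ring
    _ ≤ s (k - j) * s j := mul_le_mul_of_nonneg_right (hq _ hjΓ) (hs _).le
    _ = infConv s k := by rw [hvk]; ring

lemma infConv_chain (s : ℕ → ℝ) (hs : ∀ k, 0 < s k) (t : ℝ) (ht : 0 < t) (k : ℕ) :
    ∀ m : ℕ, k + m ≤ 2 * GammaIdx s t - 1 →
      t ^ m * infConv s (k + m) ≤ infConv s k := by
  intro m
  induction m with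
  | zero => simp
  | succ m ih =>
    intro hm
    have h1 : t * infConv s (k + m + 1) ≤ infConv s (k + m) :=
      infConv_step s hs t ht (k + m) (by omega)
    have h2 := ih (by omega)
    calc t ^ (m + 1) * infConv s (k + (m + 1)) = t ^ m * (t * infConv s (k + m + 1)) := by
          rw [show k + (m+1) = k + m + 1 by omega]; ring
    _ ≤ t ^ m * infConv s (k + m) :=
          mul_le_mul_of_nonneg_left h1 (pow_nonneg ht.le m)
    _ ≤ infConv s k := h2

lemma mFact_pos {n : ℕ} (β : Fin n → ℕ) : 0 < mFact β :=
  Finset.prod_pos fun i _ => Nat.factorial_pos _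

lemma mSum_sub {n : ℕ} {α β : Fin n → ℕ} (h : ∀ i, α i ≤ β i) :
    mSum (β - α) = mSum β - mSum α := by
  rw [mSum, mSum, mSum]
  simp only [Pi.sub_apply]
  exact Finset.sum_tsub_distrib _ fun i _ => h i

lemma mSum_le_of_le {n : ℕ} {α β : Fin n → ℕ} (h : ∀ i, α i ≤ β i) : mSum α ≤ mSum β :=
  Finset.sum_le_sum fun i _ => h i

lemma abs_mPow_le {n : ℕ} (z : Fin n → ℝ) (γ : Fin n → ℕ) (d : ℝ) (hd : 0 ≤ d)
    (hz : ∀ i, |z i| ≤ d) : |mPow z γ| ≤ d ^ (mSum γ) := by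
  rw [mPow, Finset.abs_prod, mSum, ← Finset.prod_pow_eq_pow_sum]
  exact Finset.prod_le_prod (fun i _ => abs_nonneg _)
    (fun i _ => by rw [abs_pow]; exact pow_le_pow_left₀ (abs_nonneg _) (hz i) _)

lemma descFactorial_prod_eq {n : ℕ} {α β : Fin n → ℕ} (h : ∀ i, α i ≤ β i) :
    (∏ i, ((β i).descFactorial (α i)) : ℕ) * mFact (β - α) = mFact β := by
  rw [mFact, mFact, ← Finset.prod_mul_distrib]
  refine Finset.prod_congr rfl fun i _ => ?_
  have := Nat.factorial_mul_descFactorial (h i)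
  rw [mul_comm] at this
  simpa [Pi.sub_apply] using this

lemma term_bound {n : ℕ} (α β : Fin n → ℕ) (hab : ∀ i, α i ≤ β i)
    (Fb v C ρ d : ℝ) (hC : 0 ≤ C) (hρ : 0 ≤ ρ) (hv : 0 ≤ v) (hd : 0 ≤ d)
    (hF : |Fb| ≤ C * ρ ^ (mSum β) * ((mSum β).factorial * v))
    (z : Fin n → ℝ) (hz : ∀ i, |z i| ≤ d) :
    |Fb / mFact β * (∏ i, ((β i).descFactorial (α i) : ℝ)) * mPow z (β - α)|
      ≤ (C * (2*ρ) ^ (mSum α) * (mSum α).factorial) *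
        ((2*ρ*n) ^ (mSum β - mSum α) * (v * d ^ (mSum β - mSum α))) := by
  set m := mSum β - mSum α with hm
  have hsum : mSum β = mSum α + m := by
    have := mSum_le_of_le hab; omega
  have hfm : (0:ℝ) < mFact β := by exact_mod_cast mFact_pos β
  have hfma : (0:ℝ) < mFact (β - α) := by exact_mod_cast mFact_pos (β - α)
  have hD : (∏ i, ((β i).descFactorial (α i) : ℝ)) = (mFact β : ℝ) / mFact (β - α) := by
    rw [eq_div_iff hfma.ne']
    exact_mod_cast descFactorial_prod_eq hab
  rw [abs_mul, abs_mul, abs_div]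
  rw [abs_of_nonneg (by positivity : (0:ℝ) ≤ (mFact β : ℝ)),
      abs_of_nonneg (by positivity : (0:ℝ) ≤ ∏ i, ((β i).descFactorial (α i) : ℝ)), hD]
  have hmp : |mPow z (β - α)| ≤ d ^ m := by
    rw [hm, ← mSum_sub hab]; exact abs_mPow_le z (β - α) d hd hz
  have hf1 : ((mSum β).factorial : ℝ) ≤ 2 ^ (mSum β) * ((mSum α).factorial * m.factorial) := by
    rw [hsum]; exact_mod_cast fact_add_le' (mSum α) m
  have hf2 : (m.factorial : ℝ) ≤ (n:ℝ) ^ m * mFact (β - α) := by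
    have := mSum_fact_le (β - α)
    rw [mSum_sub hab, ← hm] at this
    exact_mod_cast this
  calc |Fb| / (mFact β : ℝ) * ((mFact β : ℝ) / mFact (β - α)) * |mPow z (β - α)|
      = |Fb| / (mFact (β - α) : ℝ) * |mPow z (β - α)| := by field_simp
  _ ≤ (C * ρ ^ (mSum β) * ((mSum β).factorial * v)) / (mFact (β - α) : ℝ) * d ^ m := by
      gcongr
  _ ≤ (C * ρ ^ (mSum β) * ((2 ^ (mSum β) * ((mSum α).factorial * m.factorial)) * v))
        / (mFact (β - α) : ℝ) * d ^ m := by gcongr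
  _ = (C * (2*ρ) ^ (mSum α) * (mSum α).factorial) *
        ((2*ρ)^m * ((m.factorial : ℝ) / mFact (β - α)) * (v * d ^ m)) := by
      rw [hsum]; field_simp; ring
  _ ≤ (C * (2*ρ) ^ (mSum α) * (mSum α).factorial) *
        ((2*ρ)^m * (n:ℝ)^m * (v * d ^ m)) := by
      have : (m.factorial : ℝ) / mFact (β - α) ≤ (n:ℝ)^m := by
        rw [div_le_iff₀ hfma]; exact hf2
      gcongr
  _ = (C * (2*ρ) ^ (mSum α) * (mSum α).factorial) * ((2*ρ*n) ^ m * (v * d ^ m)) := by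
      ring

lemma mem_mIdxLe {n p : ℕ} {β : Fin n → ℕ} (hβ : β ∈ mIdxLe n p) : mSum β ≤ p :=
  (Finset.mem_filter.mp hβ).2

lemma sum_pow_half_le (n p : ℕ) (α : Fin n → ℕ) :
    ∑ β ∈ mIdxLe n p, (if ∀ i, α i ≤ β i then (1/2:ℝ)^(mSum β - mSum α) else 0) ≤ 2^n := by
  classical
  rw [← Finset.sum_filter]
  set P := (mIdxLe n p).filter fun β => ∀ i, α i ≤ β i with hP
  have h1 : ∑ β ∈ P, (1/2:ℝ)^(mSum β - mSum α) = ∑ β ∈ P, (1/2:ℝ)^(mSum (β - α)) := by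
    refine Finset.sum_congr rfl fun β hβ => ?_
    rw [mSum_sub (Finset.mem_filter.mp hβ).2]
  have hinj : Set.InjOn (· - α) P := by
    intro β hβ β' hβ' h
    have hb := (Finset.mem_filter.mp hβ).2
    have hb' := (Finset.mem_filter.mp hβ').2
    funext i
    have := congrFun h i
    simp only [Pi.sub_apply] at this
    have h1 := hb i; have h2 := hb' i
    omega
  have h2 : ∑ γ ∈ P.image (· - α), (1/2:ℝ)^(mSum γ) =
      ∑ β ∈ P, (1/2:ℝ)^(mSum (β - α)) :=
    Finset.sum_image (f := fun γ => (1/2:ℝ)^(mSum γ)) (g := (· - α))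
      (fun β hβ β' hβ' h => hinj hβ hβ' h)
  have hsub : P.image (· - α) ⊆ Fintype.piFinset fun _ : Fin n => Finset.range (p+1) := by
    intro γ hγ
    obtain ⟨β, hβ, rfl⟩ := Finset.mem_image.mp hγ
    have hβ2 := (Finset.mem_filter.mp (Finset.mem_filter.mp hβ).1).1
    rw [Fintype.mem_piFinset] at hβ2 ⊢
    intro i
    rw [Finset.mem_range] at *
    have := hβ2 i
    rw [Finset.mem_range] at this
    simp only [Pi.sub_apply]
    omega
  have h3 : ∑ γ ∈ P.image (· - α), (1/2:ℝ)^(mSum γ) ≤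
      ∑ γ ∈ Fintype.piFinset (fun _ : Fin n => Finset.range (p+1)), (1/2:ℝ)^(mSum γ) :=
    Finset.sum_le_sum_of_subset_of_nonneg hsub (fun γ _ _ => by positivity)
  have h4 : ∑ γ ∈ Fintype.piFinset (fun _ : Fin n => Finset.range (p+1)), (1/2:ℝ)^(mSum γ)
      = ∏ _i : Fin n, ∑ k ∈ Finset.range (p+1), (1/2:ℝ)^k := by
    rw [Finset.prod_univ_sum]
    refine Finset.sum_congr rfl fun γ _ => ?_
    rw [mSum, ← Finset.prod_pow_eq_pow_sum]
  have h5 : (∏ _i : Fin n, ∑ k ∈ Finset.range (p+1), (1/2:ℝ)^k) ≤ ∏ _i : Fin n, (2:ℝ) :=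
    Finset.prod_le_prod (fun _ _ => by positivity) (fun _ _ => sum_geometric_two_le _)
  calc ∑ β ∈ P, (1/2:ℝ)^(mSum β - mSum α)
      = ∑ γ ∈ P.image (· - α), (1/2:ℝ)^(mSum γ) := by rw [h1, h2]
  _ ≤ ∏ _i : Fin n, (2:ℝ) := le_trans h3 (le_trans (le_of_eq h4) h5)
  _ = 2^n := by rw [Finset.prod_const, Finset.card_univ, Fintype.card_fin]

lemma geom_step (s : ℕ → ℝ) (hs : ∀ k, 0 < s k) (L d ρ : ℝ) (n : ℕ)
    (hL0 : 0 < L) (hd : 0 < d) (hρ : 0 ≤ ρ) (h4 : 4 * ρ * n ≤ L) (k m : ℕ)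
    (hkm : k + m ≤ 2 * GammaIdx s (L * d) - 1) :
    (2*ρ*n)^m * (infConv s (k+m) * d^m) ≤ infConv s k * (1/2)^m := by
  have hchain := infConv_chain s hs (L*d) (mul_pos hL0 hd) k m hkm
  have hx : (2*ρ*(n:ℝ))^m * (infConv s (k+m) * d^m)
      = (2*ρ*(n:ℝ)/L)^m * ((L*d)^m * infConv s (k+m)) := by
    rw [div_pow, mul_pow L d]
    have : L^m ≠ 0 := pow_ne_zero _ hL0.ne'
    field_simp
  rw [hx]
  have h1 : 2*ρ*(n:ℝ)/L ≤ 1/2 := by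
    rw [div_le_iff₀ hL0]
    nlinarith
  have h0 : (0:ℝ) ≤ 2*ρ*(n:ℝ)/L := by positivity
  calc (2*ρ*(n:ℝ)/L)^m * ((L*d)^m * infConv s (k+m))
      ≤ (1/2)^m * infConv s k := by
        exact mul_le_mul (pow_le_pow_left₀ h0 h1 m) hchain
          (mul_nonneg (by positivity) (infConv_pos s hs _).le) (by positivity)
  _ = infConv s k * (1/2)^m := mul_comm _ _

lemma geom_step2 (s : ℕ → ℝ) (hs : ∀ k, 0 < s k) (L d ρ : ℝ) (n : ℕ)
    (hL0 : 0 < L) (hd : 0 < d) (hρ : 0 ≤ ρ) (h4 : 4 * ρ * n ≤ L) (k m : ℕ) (hm : 1 ≤ m)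
    (hkm : k + m ≤ 2 * GammaIdx s (L * d) - 1) :
    (2*ρ*n)^m * (infConv s (k+m) * d^m) ≤ (4*ρ*n*d) * infConv s (k+1) * (1/2)^m := by
  obtain ⟨m', rfl⟩ : ∃ m', m = m' + 1 := ⟨m - 1, by omega⟩
  have hchain := infConv_chain s hs (L*d) (mul_pos hL0 hd) (k+1) m' (by omega)
  have hkk : k + 1 + m' = k + (m' + 1) := by omega
  rw [hkk] at hchain
  have hx : (2*ρ*(n:ℝ))^(m'+1) * (infConv s (k+(m'+1)) * d^(m'+1))
      = (2*ρ*(n:ℝ)*d) * ((2*ρ*(n:ℝ)/L)^m' * ((L*d)^m' * infConv s (k+(m'+1)))) := by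
    rw [div_pow, mul_pow L d]
    have : L^m' ≠ 0 := pow_ne_zero _ hL0.ne'
    field_simp
    ring
  rw [hx]
  have h1 : 2*ρ*(n:ℝ)/L ≤ 1/2 := by
    rw [div_le_iff₀ hL0]
    nlinarith
  have h0 : (0:ℝ) ≤ 2*ρ*(n:ℝ)/L := by positivity
  have h2 : (2*ρ*(n:ℝ)/L)^m' * ((L*d)^m' * infConv s (k+(m'+1)))
      ≤ (1/2)^m' * infConv s (k+1) := by
    exact mul_le_mul (pow_le_pow_left₀ h0 h1 m') hchain
      (mul_nonneg (by positivity) (infConv_pos s hs _).le) (by positivity)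
  calc (2*ρ*(n:ℝ)*d) * ((2*ρ*(n:ℝ)/L)^m' * ((L*d)^m' * infConv s (k+(m'+1))))
      ≤ (2*ρ*(n:ℝ)*d) * ((1/2)^m' * infConv s (k+1)) :=
        mul_le_mul_of_nonneg_left h2 (by positivity)
  _ = (4*ρ*(n:ℝ)*d) * infConv s (k+1) * (1/2)^(m'+1) := by ring

/-- Lemma 4: estimates for the Taylor polynomials of a Whitney ultrajet of class
`B^{V}` where `V_k = k! v_k` and `v` is the infimal convolution of `s` with itself. -/
theorem lemma4_taylor_estimates :
    ∀ n : ℕ, 0 < n → ∃ C0 : ℝ, 1 < C0 ∧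
      ∀ E : Set (Fin n → ℝ), IsCompact E → E.Nonempty →
      ∀ s : ℕ → ℝ, (∀ k, 0 < s k) → s 0 = 1 →
        (∀ k : ℕ, 1 ≤ k → s k ^ 2 ≤ s (k - 1) * s (k + 1)) →
        Tendsto (fun k : ℕ => s (k + 1) / s k) atTop atTop →
      ∀ F : (Fin n → ℕ) → (Fin n → ℝ) → ℝ, IsJet E F →
      ∀ C : ℝ, 0 < C → ∀ ρ : ℝ, 1 ≤ ρ →
        (∀ α : Fin n → ℕ, ∀ a ∈ E, |F α a| ≤
          C * ρ ^ (mSum α) * ((Nat.factorial (mSum α) : ℝ) * infConv s (mSum α))) →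
        (∀ k : ℕ, ∀ α : Fin n → ℕ, mSum α ≤ k → ∀ a ∈ E, ∀ b ∈ E,
          |jetRem F k α a b| ≤ C * ρ ^ (k + 1) * (Nat.factorial (mSum α) : ℝ) *
            infConv s (k + 1) * ‖b - a‖ ^ (k + 1 - mSum α)) →
      ∀ L : ℝ, C0 * ρ ≤ L →
      ∀ x : Fin n → ℝ, x ∉ E → ∀ xh : Fin n → ℝ, xh ∈ E →
        ‖x - xh‖ = Metric.infDist x E →
      ∀ α : Fin n → ℕ,
        |mDeriv α (jetTaylor F (max (2 * GammaIdx s (L * Metric.infDist x E) - 1) 0) xh) x|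
          ≤ C * (2 * L) ^ (mSum α + 1) *
            ((Nat.factorial (mSum α) : ℝ) * infConv s (mSum α)) ∧
        (mSum α < max (2 * GammaIdx s (L * Metric.infDist x E) - 1) 0 →
          |mDeriv α (jetTaylor F (max (2 * GammaIdx s (L * Metric.infDist x E) - 1) 0) xh) x
              - F α xh|
            ≤ C * (2 * L) ^ (mSum α + 1) * (Nat.factorial (mSum α) : ℝ) *
              infConv s (mSum α + 1) * Metric.infDist x E) := by
  intro n hn
  refine ⟨4 ^ (n + 1), ?_, ?_⟩
  · exact one_lt_pow₀ (by norm_num) (by omega)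
  intro E hEc hEne s hs hs0 hslc hstend F hFjet C hC ρ hρ hFb hRb L hL x hxE xh hxhE hxh α
  have hρ0 : (0:ℝ) < ρ := lt_of_lt_of_le one_pos hρ
  have hnR : (1:ℝ) ≤ n := by exact_mod_cast hn
  have h2n : (n:ℝ) ≤ 2^n := by exact_mod_cast (Nat.lt_two_pow_self (n := n)).le
  have h24 : (2:ℝ)^n ≤ 4^n := pow_le_pow_left₀ (by norm_num) (by norm_num) n
  have h4s : (4:ℝ)^(n+1) = 4 * 4^n := by rw [pow_succ]; try ring
  have h4n4 : (4:ℝ)^n = 2^n * 2^n := by rw [← mul_pow]; norm_num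
  have h2p : (0:ℝ) < 2^n := by positivity
  have hL0 : (0:ℝ) < L := lt_of_lt_of_le (by positivity) hL
  have h41 : (1:ℝ) ≤ 4^(n+1) := by
    calc (1:ℝ) = 1^(n+1) := (one_pow _).symm
    _ ≤ 4^(n+1) := pow_le_pow_left₀ (by norm_num) (by norm_num) _
  have hρL : ρ ≤ L := by nlinarith
  have h4ρn : 4 * ρ * n ≤ L := by nlinarith
  have h2nL : (2:ℝ)^n ≤ L := by nlinarith
  have hn2L : (n:ℝ) * 2^(n+2) * ρ ≤ 2 * L := by
    have e1 : (n:ℝ) * 2^(n+2) * ρ = 4*(n:ℝ)*2^n*ρ := by rw [pow_add]; ring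
    nlinarith
  set d := Metric.infDist x E with hd
  have hd0 : 0 < d := by
    have hne : x - xh ≠ 0 := sub_ne_zero.mpr (by rintro rfl; exact hxE hxhE)
    rw [← hxh]
    exact norm_pos_iff.mpr hne
  have hdz : ∀ i, |(x - xh) i| ≤ d := by
    intro i
    have h := norm_le_pi_norm (x - xh) i
    rw [Real.norm_eq_abs] at h
    rw [← hxh]
    exact h
  rw [Nat.max_eq_left (Nat.zero_le _)]
  set Γ := GammaIdx s (L * d) with hΓ
  set p := 2 * Γ - 1 with hp
  have hTay : mDeriv α (jetTaylor F p xh) x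
      = ∑ β ∈ mIdxLe n p,
          (F β xh / mFact β * ∏ i, ((β i).descFactorial (α i) : ℝ)) * mPow (x - xh) (β - α) := by
    have hT : jetTaylor F p xh
        = fun y => ∑ β ∈ mIdxLe n p, (F β xh / (mFact β : ℝ)) * mPow (y - xh) β := by
      funext y
      rw [jetTaylor]
      exact Finset.sum_congr rfl fun β _ => by ring
    rw [hT, mDeriv_sum_mono]
  set K1 : ℝ := C * (2*ρ) ^ (mSum α) * ((mSum α).factorial : ℝ) with hK1
  have hK1pos : 0 < K1 := by
    rw [hK1]; positivity
  have hvpos : ∀ k, 0 < infConv s k := infConv_pos s hs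
  have key0 : ∀ β ∈ mIdxLe n p, (∀ i, α i ≤ β i) →
      |(F β xh / mFact β * ∏ i, ((β i).descFactorial (α i) : ℝ)) * mPow (x - xh) (β - α)|
        ≤ K1 * ((2*ρ*n) ^ (mSum β - mSum α) * (infConv s (mSum β) * d ^ (mSum β - mSum α))) := by
    intro β hβ hab
    exact term_bound α β hab (F β xh) (infConv s (mSum β)) C ρ d hC.le hρ0.le
      (hvpos _).le hd0.le (hFb β xh hxhE) (x - xh) hdz
  have keyz : ∀ β : Fin n → ℕ, ¬ (∀ i, α i ≤ β i) →
      (F β xh / mFact β * ∏ i, ((β i).descFactorial (α i) : ℝ)) * mPow (x - xh) (β - α) = 0 := by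
    intro β hab
    push_neg at hab
    obtain ⟨i, hi⟩ := hab
    have hz : (∏ i, ((β i).descFactorial (α i) : ℝ)) = 0 :=
      Finset.prod_eq_zero (Finset.mem_univ i)
        (by exact_mod_cast congrArg (Nat.cast : ℕ → ℝ) (Nat.descFactorial_eq_zero_iff_lt.mpr hi))
    rw [hz]
    ring
  constructor
  · -- part 1
    have key1 : ∀ β ∈ mIdxLe n p,
        |(F β xh / mFact β * ∏ i, ((β i).descFactorial (α i) : ℝ)) * mPow (x - xh) (β - α)|
          ≤ (K1 * infConv s (mSum α)) *
            (if ∀ i, α i ≤ β i then (1/2:ℝ)^(mSum β - mSum α) else 0) := by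
      intro β hβ
      by_cases hab : ∀ i, α i ≤ β i
      · rw [if_pos hab]
        refine (key0 β hβ hab).trans ?_
        have hmb : mSum α ≤ mSum β := mSum_le_of_le hab
        have hβp : mSum β ≤ p := mem_mIdxLe hβ
        have hg := geom_step s hs L d ρ n hL0 hd0 hρ0.le h4ρn (mSum α) (mSum β - mSum α)
          (by rw [← hΓ]; omega)
        rw [show mSum α + (mSum β - mSum α) = mSum β from by omega] at hg
        calc K1 * ((2*ρ*n) ^ (mSum β - mSum α) * (infConv s (mSum β) * d ^ (mSum β - mSum α)))
            ≤ K1 * (infConv s (mSum α) * (1/2)^(mSum β - mSum α)) :=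
              mul_le_mul_of_nonneg_left hg hK1pos.le
        _ = (K1 * infConv s (mSum α)) * (1/2)^(mSum β - mSum α) := by ring
      · rw [if_neg hab, keyz β hab]
        simp
    rw [hTay]
    calc |∑ β ∈ mIdxLe n p,
          (F β xh / mFact β * ∏ i, ((β i).descFactorial (α i) : ℝ)) * mPow (x - xh) (β - α)|
        ≤ ∑ β ∈ mIdxLe n p,
          |(F β xh / mFact β * ∏ i, ((β i).descFactorial (α i) : ℝ)) * mPow (x - xh) (β - α)| :=
          Finset.abs_sum_le_sum_abs _ _
    _ ≤ ∑ β ∈ mIdxLe n p, (K1 * infConv s (mSum α)) *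
          (if ∀ i, α i ≤ β i then (1/2:ℝ)^(mSum β - mSum α) else 0) :=
          Finset.sum_le_sum key1
    _ = (K1 * infConv s (mSum α)) * ∑ β ∈ mIdxLe n p,
          (if ∀ i, α i ≤ β i then (1/2:ℝ)^(mSum β - mSum α) else 0) := by
          rw [Finset.mul_sum]
    _ ≤ (K1 * infConv s (mSum α)) * 2^n :=
          mul_le_mul_of_nonneg_left (sum_pow_half_le n p α)
            (mul_nonneg hK1pos.le (hvpos _).le)
    _ ≤ C * (2 * L) ^ (mSum α + 1) * ((Nat.factorial (mSum α) : ℝ) * infConv s (mSum α)) := by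
          rw [hK1]
          have h1 : (2*ρ)^(mSum α) ≤ (2*L)^(mSum α) :=
            pow_le_pow_left₀ (by positivity) (by linarith) _
          have h2 : (2:ℝ)^n ≤ 2*L := by linarith
          calc C * (2*ρ) ^ (mSum α) * ((mSum α).factorial : ℝ) * infConv s (mSum α) * 2^n
              = C * ((2*ρ)^(mSum α) * 2^n) * (((mSum α).factorial : ℝ) * infConv s (mSum α)) := by
                ring
          _ ≤ C * ((2*L)^(mSum α) * (2*L)) * (((mSum α).factorial : ℝ) * infConv s (mSum α)) := by
                refine mul_le_mul_of_nonneg_right (mul_le_mul_of_nonneg_left ?_ hC.le)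
                  (mul_nonneg (by positivity) (hvpos _).le)
                exact mul_le_mul h1 h2 (by positivity) (by positivity)
          _ = C * (2 * L) ^ (mSum α + 1) * (((mSum α).factorial : ℝ) * infConv s (mSum α)) := by
                rw [pow_succ]; try ring
  · -- part 2
    intro hlt
    have hα : α ∈ mIdxLe n p := by
      rw [mIdxLe, Finset.mem_filter]
      constructor
      · rw [Fintype.mem_piFinset]
        intro i
        rw [Finset.mem_range]
        have : α i ≤ mSum α :=
          Finset.single_le_sum (f := α) (fun _ _ => Nat.zero_le _) (Finset.mem_univ i)
        omega
      · omega
    have htα : (F α xh / mFact α * ∏ i, ((α i).descFactorial (α i) : ℝ)) * mPow (x - xh) (α - α)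
        = F α xh := by
      have h1 : (∏ i, ((α i).descFactorial (α i) : ℝ)) = (mFact α : ℝ) := by
        rw [mFact]
        push_cast
        exact Finset.prod_congr rfl fun i _ => by rw [Nat.descFactorial_self]
      have h2 : mPow (x - xh) (α - α) = 1 := by
        rw [show α - α = (0 : Fin n → ℕ) from by simp, mPow]
        simp
      have h3 : (0:ℝ) < mFact α := by exact_mod_cast mFact_pos α
      rw [h1, h2]
      field_simp
    have hsplit : mDeriv α (jetTaylor F p xh) x - F α xh
        = ∑ β ∈ (mIdxLe n p).erase α,
            (F β xh / mFact β * ∏ i, ((β i).descFactorial (α i) : ℝ)) * mPow (x - xh) (β - α) := by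
      rw [hTay, ← Finset.add_sum_erase _ _ hα, htα]
      ring
    set K2 : ℝ := K1 * ((4*ρ*n*d) * infConv s (mSum α + 1)) with hK2
    have key2 : ∀ β ∈ (mIdxLe n p).erase α,
        |(F β xh / mFact β * ∏ i, ((β i).descFactorial (α i) : ℝ)) * mPow (x - xh) (β - α)|
          ≤ K2 * (if ∀ i, α i ≤ β i then (1/2:ℝ)^(mSum β - mSum α) else 0) := by
      intro β hβ
      obtain ⟨hne, hβm⟩ := Finset.mem_erase.mp hβ
      by_cases hab : ∀ i, α i ≤ β i
      · rw [if_pos hab]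
        refine (key0 β hβm hab).trans ?_
        have hmb : mSum α < mSum β := by
          have hone : ∃ i, α i ≠ β i := by
            by_contra hcon
            push_neg at hcon
            exact hne (funext fun i => (hcon i).symm)
          obtain ⟨i, hi⟩ := hone
          exact Finset.sum_lt_sum (fun j _ => hab j)
            ⟨i, Finset.mem_univ i, lt_of_le_of_ne (hab i) hi⟩
        have hβp : mSum β ≤ p := mem_mIdxLe hβm
        have hg := geom_step2 s hs L d ρ n hL0 hd0 hρ0.le h4ρn (mSum α) (mSum β - mSum α)
          (by omega) (by rw [← hΓ]; omega)
        rw [show mSum α + (mSum β - mSum α) = mSum β from by omega] at hg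
        calc K1 * ((2*ρ*n) ^ (mSum β - mSum α) * (infConv s (mSum β) * d ^ (mSum β - mSum α)))
            ≤ K1 * ((4*ρ*n*d) * infConv s (mSum α + 1) * (1/2)^(mSum β - mSum α)) :=
              mul_le_mul_of_nonneg_left hg hK1pos.le
        _ = K2 * (1/2)^(mSum β - mSum α) := by rw [hK2]; ring
      · rw [if_neg hab, keyz β hab]
        simp
    have hK2pos : 0 ≤ K2 := by
      rw [hK2]
      exact mul_nonneg hK1pos.le (mul_nonneg (by positivity) (hvpos _).le)
    rw [hsplit]
    calc |∑ β ∈ (mIdxLe n p).erase α,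
          (F β xh / mFact β * ∏ i, ((β i).descFactorial (α i) : ℝ)) * mPow (x - xh) (β - α)|
        ≤ ∑ β ∈ (mIdxLe n p).erase α,
          |(F β xh / mFact β * ∏ i, ((β i).descFactorial (α i) : ℝ)) * mPow (x - xh) (β - α)| :=
          Finset.abs_sum_le_sum_abs _ _
    _ ≤ ∑ β ∈ (mIdxLe n p).erase α, K2 *
          (if ∀ i, α i ≤ β i then (1/2:ℝ)^(mSum β - mSum α) else 0) :=
          Finset.sum_le_sum key2
    _ = K2 * ∑ β ∈ (mIdxLe n p).erase α,
          (if ∀ i, α i ≤ β i then (1/2:ℝ)^(mSum β - mSum α) else 0) := by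
          rw [Finset.mul_sum]
    _ ≤ K2 * ∑ β ∈ mIdxLe n p,
          (if ∀ i, α i ≤ β i then (1/2:ℝ)^(mSum β - mSum α) else 0) := by
          refine mul_le_mul_of_nonneg_left ?_ hK2pos
          refine Finset.sum_le_sum_of_subset_of_nonneg (Finset.erase_subset _ _) ?_
          intro β _ _
          by_cases hab : ∀ i, α i ≤ β i
          · rw [if_pos hab]; positivity
          · rw [if_neg hab]
    _ ≤ K2 * 2^n := mul_le_mul_of_nonneg_left (sum_pow_half_le n p α) hK2pos
    _ ≤ C * (2 * L) ^ (mSum α + 1) * ((mSum α).factorial : ℝ) * infConv s (mSum α + 1) * d := by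
          rw [hK2, hK1]
          have h1 : (2*ρ)^(mSum α) ≤ (2*L)^(mSum α) :=
            pow_le_pow_left₀ (by positivity) (by linarith) _
          have h2 : 4*ρ*(n:ℝ)*2^n ≤ 2*L := by
            have e1 : (n:ℝ) * 2^(n+2) * ρ = 4*ρ*(n:ℝ)*2^n := by rw [pow_add]; ring
            linarith [hn2L, e1.symm.le]
          calc C * (2*ρ) ^ (mSum α) * ((mSum α).factorial : ℝ) *
                ((4*ρ*n*d) * infConv s (mSum α + 1)) * 2^n
              = C * ((2*ρ)^(mSum α) * (4*ρ*(n:ℝ)*2^n)) *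
                (((mSum α).factorial : ℝ) * infConv s (mSum α + 1) * d) := by ring
          _ ≤ C * ((2*L)^(mSum α) * (2*L)) *
                (((mSum α).factorial : ℝ) * infConv s (mSum α + 1) * d) := by
                refine mul_le_mul_of_nonneg_right (mul_le_mul_of_nonneg_left ?_ hC.le)
                  (mul_nonneg (mul_nonneg (by positivity) (hvpos _).le) hd0.le)
                exact mul_le_mul h1 h2 (by positivity) (by positivity)
          _ = C * (2 * L) ^ (mSum α + 1) * ((mSum α).factorial : ℝ) *
                infConv s (mSum α + 1) * d := by
                rw [pow_succ]; try ring
end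
end
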